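/- arXiv:2502.06183 — 4 statements merged into one kernel-verified Lean document; each statement's English description precedes it below -/
import Mathlib

section
/- Let x ∈ ℝⁿ with ‖x‖ = 1 and let d ∈ ℝⁿ satisfy ⟨x, d⟩ = 0. Then ‖(x + d)/‖x + d‖ - x‖ ≤ ‖d‖. -/
/-! Radial projection onto the unit sphere does not move a point of norm at least one farther
from the closed unit ball: for a unit vector `u`, `r ≥ 1` and `‖x‖ ≤ 1`, the squares of the
distances from `r • u` and from `u` to `x` differ by `(r - 1) (r + 1 - 2 ⟪u, x⟫) ≥ 0`, because
`⟪u, x⟫ ≤ ‖x‖ ≤ 1`. Orthogonality of `d` to the unit vector `x` gives `‖x + d‖ ≥ 1` by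
Pythagoras, so this applies to `x + d = ‖x + d‖ • u`. -/

open scoped RealInnerProductSpace

section

variable {E : Type*} [NormedAddCommGroup E] [InnerProductSpace ℝ E]

theorem norm_sub_le_norm_smul_sub_of_norm_eq_one {u x : E} {r : ℝ} (hu : ‖u‖ = 1)
    (hx : ‖x‖ ≤ 1) (hr : 1 ≤ r) : ‖u - x‖ ≤ ‖r • u - x‖ := by
  have hux : ⟪u, x⟫ ≤ 1 := (real_inner_le_norm u x).trans (by rwa [hu, one_mul])
  rw [← sq_le_sq₀ (norm_nonneg _) (norm_nonneg _), norm_sub_sq_real, norm_sub_sq_real,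
    real_inner_smul_left, norm_smul, hu, Real.norm_of_nonneg (zero_le_one.trans hr)]
  nlinarith

theorem norm_inv_norm_smul_sub_le_norm_sub {x v : E} (hx : ‖x‖ ≤ 1) (hv : 1 ≤ ‖v‖) :
    ‖‖v‖⁻¹ • v - x‖ ≤ ‖v - x‖ := by
  have hv₀ : ‖v‖ ≠ 0 := (zero_lt_one.trans_le hv).ne'
  have hu : ‖‖v‖⁻¹ • v‖ = 1 := by rw [norm_smul, norm_inv, norm_norm, inv_mul_cancel₀ hv₀]
  have h := norm_sub_le_norm_smul_sub_of_norm_eq_one hu hx hv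
  rwa [smul_inv_smul₀ hv₀] at h

end

theorem stmt_1 (n : ℕ) (x d : EuclideanSpace ℝ (Fin n)) (hx : ‖x‖ = 1)
    (hxd : ⟪x, d⟫ = 0) :
    ‖‖x + d‖⁻¹ • (x + d) - x‖ ≤ ‖d‖ := by
  have h_one_le : 1 ≤ ‖x + d‖ := by
    have := norm_add_sq_eq_norm_sq_add_norm_sq_real hxd
    nlinarith [norm_nonneg (x + d)]
  simpa using norm_inv_norm_smul_sub_le_norm_sub hx.le h_one_le
end

section
/- Let φ : [0,∞) → [0,∞) be a continuous concave function with φ(0) = 0 that is differentiable on (0,∞), and suppose the limit ℓ := lim_{s↓0} φ'(s) exists. Let Y ∈ ℝ^{n×p} and define f(x) = Σ_{i=1}^p φ(|[Yᵀx]_i|). Then f is Lipschitz continuous on ℝⁿ with modulus ℓ √p ‖Y‖₂, where ‖Y‖₂ is the operator norm of Y. -/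
open scoped RealInnerProductSpace

/-!
A concave function on `[0, ∞)` that is bounded below cannot have a negative derivative, and its
derivative is antitone, so `0 ≤ φ' ≤ ℓ` on `(0, ∞)`. By the mean value theorem `φ` is `ℓ`-Lipschitz on `[0, ∞)`, hence so is
`u ↦ φ |u|` on `ℝ`. Summing over the `p` coordinates of `Yᵀ(x - y)` and comparing the `ℓ¹` and `ℓ²`
norms via Cauchy–Schwarz gives the factor `√p ‖Y‖₂`.
-/

open Set Filter Topology

lemma ConcaveOn.deriv_nonneg_of_bddBelow {φ : ℝ → ℝ} {a c : ℝ}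
    (hconc : ConcaveOn ℝ (Ici a) φ) (hbdd : BddBelow (φ '' Ici a)) (hc : a ≤ c)
    (hdiff : DifferentiableAt ℝ φ c) : 0 ≤ deriv φ c := by
  by_contra! hneg
  -- a tangent line of negative slope drops below any lower bound `m`, e.g. to `m - 1` at `t`
  obtain ⟨m, hm⟩ := hbdd
  have hmc : m ≤ φ c := hm ⟨c, hc, rfl⟩
  set t := c + (φ c - m + 1) / -deriv φ c
  have hct : c < t := lt_add_of_pos_right c (div_pos (by linarith) (by linarith))
  have hslope : (φ t - φ c) / (t - c) ≤ deriv φ c := by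
    simpa only [slope_def_field] using
      hconc.slope_le_deriv (mem_Ici.2 hc) (mem_Ici.2 (hc.trans hct.le)) hct hdiff
  have htangent : φ t ≤ m - 1 := by
    have hdt : deriv φ c * (t - c) = -(φ c - m + 1) := by
      rw [add_sub_cancel_left, mul_div_assoc', div_neg, mul_div_cancel_left₀ _ hneg.ne]
    rw [div_le_iff₀ (sub_pos.2 hct)] at hslope
    linarith
  linarith [hm ⟨t, mem_Ici.2 (hc.trans hct.le), rfl⟩]

lemma AntitoneOn.le_of_tendsto_nhdsGT {g : ℝ → ℝ} {a ℓ c : ℝ} (hg : AntitoneOn g (Ioi a))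
    (hℓ : Tendsto g (𝓝[>] a) (𝓝 ℓ)) (hc : a < c) : g c ≤ ℓ :=
  ge_of_tendsto hℓ <| by
    filter_upwards [Ioo_mem_nhdsGT hc] with s hs
    exact hg hs.1 (hs.1.trans hs.2) hs.2.le

lemma Convex.abs_sub_le_mul_abs_sub_of_abs_deriv_le {D : Set ℝ} (hD : Convex ℝ D) {φ : ℝ → ℝ}
    {L : ℝ} (hcont : ContinuousOn φ D) (hdiff : DifferentiableOn ℝ φ (interior D))
    (hbound : ∀ c ∈ interior D, |deriv φ c| ≤ L) {s t : ℝ} (hs : s ∈ D) (ht : t ∈ D) :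
    |φ s - φ t| ≤ L * |s - t| := by
  wlog hst : s ≤ t generalizing s t
  · rw [abs_sub_comm, abs_sub_comm s]
    exact this ht hs (le_of_not_ge hst)
  have hupper : φ t - φ s ≤ L * (t - s) :=
    hD.image_sub_le_mul_sub_of_deriv_le hcont hdiff (fun c hc => (le_abs_self _).trans (hbound c hc))
      s hs t ht hst
  have hlower : -L * (t - s) ≤ φ t - φ s :=
    hD.mul_sub_le_image_sub_of_le_deriv hcont hdiff (fun c hc => neg_le_of_abs_le (hbound c hc))
      s hs t ht hst
  rw [abs_sub_comm, abs_sub_comm s, abs_of_nonneg (sub_nonneg.2 hst)]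
  exact abs_le.2 ⟨by linarith, hupper⟩

lemma EuclideanSpace.sum_abs_le_sqrt_card_mul_norm {ι : Type*} [Fintype ι]
    (v : EuclideanSpace ℝ ι) : ∑ i, |v i| ≤ √(Fintype.card ι) * ‖v‖ := by
  have hcs : (∑ i, |v i|) ^ 2 ≤ Fintype.card ι * ∑ i, |v i| ^ 2 := by
    simpa using sq_sum_le_card_mul_sum_sq (s := Finset.univ) (f := fun i => |v i|)
  calc ∑ i, |v i| = √((∑ i, |v i|) ^ 2) := (Real.sqrt_sq (by positivity)).symm
    _ ≤ √(Fintype.card ι * ∑ i, |v i| ^ 2) := Real.sqrt_le_sqrt hcs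
    _ = √(Fintype.card ι) * ‖v‖ := by
      rw [Real.sqrt_mul (by positivity), EuclideanSpace.norm_eq]
      simp only [Real.norm_eq_abs]

lemma abs_sum_comp_sub_le {E ι : Type*} [NormedAddCommGroup E] [NormedSpace ℝ E] [Fintype ι]
    {g : ℝ → ℝ} {L : ℝ} (hL : 0 ≤ L) (hg : ∀ u v, |g u - g v| ≤ L * |u - v|)
    (A : E →L[ℝ] EuclideanSpace ℝ ι) (x y : E) :
    |∑ i, g (A x i) - ∑ i, g (A y i)| ≤ L * √(Fintype.card ι) * ‖A‖ * ‖x - y‖ := by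
  rw [← Finset.sum_sub_distrib]
  calc |∑ i, (g (A x i) - g (A y i))| ≤ ∑ i, |g (A x i) - g (A y i)| :=
        Finset.abs_sum_le_sum_abs _ _
    _ ≤ ∑ i, L * |A (x - y) i| := by
        gcongr with i
        rw [map_sub]
        exact hg _ _
    _ = L * ∑ i, |A (x - y) i| := by rw [Finset.mul_sum]
    _ ≤ L * (√(Fintype.card ι) * ‖A (x - y)‖) := by
        gcongr
        exact EuclideanSpace.sum_abs_le_sqrt_card_mul_norm _
    _ ≤ L * (√(Fintype.card ι) * (‖A‖ * ‖x - y‖)) := by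
        gcongr
        exact A.le_opNorm _
    _ = L * √(Fintype.card ι) * ‖A‖ * ‖x - y‖ := by ring

theorem stmt_3_general (n p : ℕ) (φ : ℝ → ℝ) (ℓ : ℝ)
    (hφcont : ContinuousOn φ (Set.Ici 0))
    (hφconc : ConcaveOn ℝ (Set.Ici 0) φ)
    (hφnonneg : ∀ s ∈ Set.Ici (0 : ℝ), 0 ≤ φ s)
    (hφdiff : DifferentiableOn ℝ φ (Set.Ioi 0))
    (hℓ : Filter.Tendsto (deriv φ) (nhdsWithin 0 (Set.Ioi 0)) (nhds ℓ))
    (A : EuclideanSpace ℝ (Fin n) →L[ℝ] EuclideanSpace ℝ (Fin p))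
    (f : EuclideanSpace ℝ (Fin n) → ℝ)
    (hf : ∀ x, f x = ∑ i, φ |A x i|) :
    ∀ x y : EuclideanSpace ℝ (Fin n),
      |f x - f y| ≤ ℓ * Real.sqrt p * ‖A‖ * ‖x - y‖ := by
  have hdiffAt : ∀ c ∈ Ioi (0 : ℝ), DifferentiableAt ℝ φ c := fun c hc =>
    hφdiff.differentiableAt (Ioi_mem_nhds hc)
  have hanti : AntitoneOn (deriv φ) (Ioi 0) :=
    (hφconc.subset Ioi_subset_Ici_self (convex_Ioi 0)).antitoneOn_deriv hdiffAt
  have hbdd : BddBelow (φ '' Ici 0) := ⟨0, by rintro _ ⟨s, hs, rfl⟩; exact hφnonneg s hs⟩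
  have hderiv : ∀ c ∈ Ioi (0 : ℝ), |deriv φ c| ≤ ℓ := by
    intro c hc
    rw [abs_of_nonneg (hφconc.deriv_nonneg_of_bddBelow hbdd (le_of_lt hc) (hdiffAt c hc))]
    exact hanti.le_of_tendsto_nhdsGT hℓ hc
  have hℓ0 : 0 ≤ ℓ := (abs_nonneg _).trans (hderiv 1 (mem_Ioi.2 one_pos))
  have hlip : ∀ u v : ℝ, |φ (|u|) - φ (|v|)| ≤ ℓ * |u - v| := fun u v =>
    ((convex_Ici 0).abs_sub_le_mul_abs_sub_of_abs_deriv_le hφcont (by rwa [interior_Ici])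
      (by rwa [interior_Ici]) (abs_nonneg u) (abs_nonneg v)).trans
      (mul_le_mul_of_nonneg_left (abs_abs_sub_abs_le_abs_sub u v) hℓ0)
  intro x y
  simpa only [hf, Fintype.card_fin] using abs_sum_comp_sub_le hℓ0 hlip A x y

/-- with `A` playing the role of the linear map `x ↦ Yᵀx`
(note that the operator norm of `Y` equals that of `Yᵀ`), the function
`f(x) = ∑ i, φ(|[Yᵀx]_i|)` is Lipschitz with modulus `ℓ √p ‖Y‖₂`. -/
theorem stmt_3 (n p : ℕ) (φ : ℝ → ℝ) (ℓ : ℝ)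
    (hφcont : ContinuousOn φ (Set.Ici 0))
    (hφconc : ConcaveOn ℝ (Set.Ici 0) φ)
    (hφ0 : φ 0 = 0)
    (hφnonneg : ∀ s ∈ Set.Ici (0 : ℝ), 0 ≤ φ s)
    (hφdiff : DifferentiableOn ℝ φ (Set.Ioi 0))
    (hℓ : Filter.Tendsto (deriv φ) (nhdsWithin 0 (Set.Ioi 0)) (nhds ℓ))
    (A : EuclideanSpace ℝ (Fin n) →L[ℝ] EuclideanSpace ℝ (Fin p))
    (f : EuclideanSpace ℝ (Fin n) → ℝ)
    (hf : ∀ x, f x = ∑ i, φ |A x i|) :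
    ∀ x y : EuclideanSpace ℝ (Fin n),
      |f x - f y| ≤ ℓ * Real.sqrt p * ‖A‖ * ‖x - y‖ :=
  stmt_3_general n p φ ℓ hφcont hφconc hφnonneg hφdiff hℓ A f hf
end

section
/- Let f : ℝⁿ → ℝ be Lipschitz continuous with modulus L. Let x ∈ ℝⁿ with ‖x‖ = 1 and d ∈ ℝⁿ with ⟨x, d⟩ = 0, and set x⁺ = (x + d)/‖x + d‖. Then f(x⁺) ≤ f(x + d) + (L/2)‖d‖². -/
/-!
Since `x ⟂ d` and `‖x‖ = 1`, Pythagoras gives `‖x + d‖ = √(1 + ‖d‖²) ∈ [1, 1 + ‖d‖²/2]`, and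
normalizing a vector moves it by exactly `|‖x + d‖ - 1|`. So the retraction moves `x + d` by at
most `‖d‖²/2`, and the Lipschitz bound on `f` converts this displacement into the claimed estimate.
-/

open scoped RealInnerProductSpace

section Retraction

variable {E : Type*} [NormedAddCommGroup E] [InnerProductSpace ℝ E]

theorem norm_inv_norm_smul_sub_self_le (v : E) : ‖‖v‖⁻¹ • v - v‖ ≤ |1 - ‖v‖| := by
  rcases eq_or_ne v 0 with rfl | hv
  · simp
  have hv' : ‖v‖ ≠ 0 := norm_ne_zero_iff.mpr hv
  refine le_of_eq ?_
  calc ‖‖v‖⁻¹ • v - v‖ = |‖v‖⁻¹ - 1| * ‖v‖ := by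
        rw [← Real.norm_eq_abs, ← norm_smul, sub_smul, one_smul]
    _ = |1 - ‖v‖| := by
        rw [← abs_norm v, ← abs_mul, abs_norm, sub_mul, inv_mul_cancel₀ hv', one_mul]

theorem abs_norm_add_sub_one_le_of_inner_eq_zero {x d : E} (hx : ‖x‖ = 1) (hxd : ⟪x, d⟫ = 0) :
    |1 - ‖x + d‖| ≤ ‖d‖ ^ 2 / 2 := by
  have hpyth : ‖x + d‖ ^ 2 = 1 + ‖d‖ ^ 2 := by
    rw [norm_add_sq_real, hxd, hx]; ring
  have hge : 1 ≤ ‖x + d‖ := by nlinarith [norm_nonneg (x + d), sq_nonneg ‖d‖]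
  rw [abs_sub_comm, abs_of_nonneg (by linarith)]
  nlinarith [sq_nonneg ‖d‖]

theorem norm_retraction_sub_le {x d : E} (hx : ‖x‖ = 1) (hxd : ⟪x, d⟫ = 0) :
    ‖‖x + d‖⁻¹ • (x + d) - (x + d)‖ ≤ ‖d‖ ^ 2 / 2 :=
  (norm_inv_norm_smul_sub_self_le (x + d)).trans
    (abs_norm_add_sub_one_le_of_inner_eq_zero hx hxd)

end Retraction

theorem stmt_8 (n : ℕ) (f : EuclideanSpace ℝ (Fin n) → ℝ) (L : ℝ)
    (hL : ∀ a b : EuclideanSpace ℝ (Fin n), |f a - f b| ≤ L * ‖a - b‖)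
    (x d : EuclideanSpace ℝ (Fin n)) (hx : ‖x‖ = 1) (hxd : ⟪x, d⟫ = 0) :
    f (‖x + d‖⁻¹ • (x + d)) ≤ f (x + d) + (L / 2) * ‖d‖ ^ 2 := by
  have hL0 : 0 ≤ L := by simpa [hx] using (abs_nonneg _).trans (hL x 0)
  set y := ‖x + d‖⁻¹ • (x + d)
  calc f y ≤ f (x + d) + L * ‖y - (x + d)‖ := by
        linarith [le_abs_self (f y - f (x + d)), hL y (x + d)]
    _ ≤ f (x + d) + L * (‖d‖ ^ 2 / 2) := by
        gcongr
        exact norm_retraction_sub_le hx hxd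
    _ = f (x + d) + (L / 2) * ‖d‖ ^ 2 := by ring
end

section
/- Let ψ : ℝ → ℝ be a convex function with dom ψ = ℝ, let Ψ(y) = Σ_{i=1}^p ψ(y_i) and let Ψ* be its Fenchel conjugate. Fix x* ∈ ℝⁿ, Y ∈ ℝ^{n×p}, β ∈ ℝ. Then the set {u ∈ ℝ^p : ∃ x, ‖x‖ = 1, ‖x - x*‖ ≤ 1, Ψ*(-u) + ⟨u, |Yᵀx|⟩ ≤ β} is bounded. -/
open scoped RealInnerProductSpace
open Matrix

/-!
Test the supremum defining `Ψ*(-u)` at `y = |Yᵀx| - sign u`: the constraint becomes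
`∑ |uᵢ| = ⟪u, sign u⟫ ≤ β + Ψ y`. Since `‖x‖ = 1`, each `yᵢ` lies in `[-Rᵢ, Rᵢ]` with
`Rᵢ = ∑ⱼ |Yⱼᵢ| + 1`, and a convex `ψ` is bounded there by `max (ψ (-Rᵢ)) (ψ Rᵢ)`.
-/

lemma abs_sign_le_one (x : ℝ) : |(SignType.sign x : ℝ)| ≤ 1 := by
  rcases SignType.sign x with _ | _ | _ <;> simp

namespace EuclideanSpace

variable {ι : Type*} [Fintype ι]

lemma norm_le_sum_abs (u : EuclideanSpace ℝ ι) : ‖u‖ ≤ ∑ i, |u i| := by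
  refine le_of_pow_le_pow_left₀ two_ne_zero (by positivity) ?_
  rw [EuclideanSpace.real_norm_sq_eq]
  simpa only [sq_abs] using Finset.sum_sq_le_sq_sum_of_nonneg fun i _ => abs_nonneg (u i)

lemma inner_eq_sum_mul (u w : EuclideanSpace ℝ ι) : ⟪u, w⟫ = ∑ i, u i * w i := by
  simp [PiLp.inner_apply, mul_comm]

noncomputable def sign (u : EuclideanSpace ℝ ι) : EuclideanSpace ℝ ι :=
  WithLp.toLp 2 fun i => (SignType.sign (u i) : ℝ)

lemma inner_sign_self (u : EuclideanSpace ℝ ι) : ⟪u, sign u⟫ = ∑ i, |u i| := by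
  simp [inner_eq_sum_mul, sign, self_mul_sign]

end EuclideanSpace

lemma Matrix.abs_mulVec_apply_le {ι κ : Type*} [Fintype κ] (A : Matrix ι κ ℝ)
    (x : EuclideanSpace ℝ κ) (i : ι) : |(A *ᵥ x) i| ≤ (∑ j, |A i j|) * ‖x‖ := by
  rw [Finset.sum_mul]
  calc |(A *ᵥ x) i| = |∑ j, A i j * x j| := rfl
    _ ≤ ∑ j, |A i j * x j| := Finset.abs_sum_le_sum_abs _ _
    _ ≤ ∑ j, |A i j| * ‖x‖ := by
      gcongr with j
      rw [abs_mul]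
      exact mul_le_mul_of_nonneg_left (PiLp.norm_apply_le x j) (abs_nonneg _)

lemma ConvexOn.sum_comp_le_sum_max {ι : Type*} [Fintype ι] {ψ : ℝ → ℝ}
    (hψ : ConvexOn ℝ Set.univ ψ) {y R : ι → ℝ} (hy : ∀ i, |y i| ≤ R i) :
    ∑ i, ψ (y i) ≤ ∑ i, max (ψ (-R i)) (ψ (R i)) :=
  Finset.sum_le_sum fun i _ =>
    hψ.le_max_of_mem_Icc (Set.mem_univ _) (Set.mem_univ _) (abs_le.mp (hy i))

lemma inner_le_of_conjugate_add_inner_le {E : Type*} [NormedAddCommGroup E]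
    [InnerProductSpace ℝ E] {Ψ : E → ℝ} {u w : E} {β : ℝ}
    (h : (⨆ y, ((⟪-u, y⟫ - Ψ y : ℝ) : EReal)) + ((⟪u, w⟫ : ℝ) : EReal) ≤ β) (s : E) :
    ⟪u, s⟫ ≤ β + Ψ (w - s) := by
  have hy : ((⟪-u, w - s⟫ - Ψ (w - s) + ⟪u, w⟫ : ℝ) : EReal) ≤ β := by
    rw [EReal.coe_add]
    exact (add_le_add_left (le_iSup (fun y => ((⟪-u, y⟫ - Ψ y : ℝ) : EReal)) (w - s)) _).trans h
  rw [inner_neg_left, inner_sub_right, EReal.coe_le_coe_iff] at hy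
  linarith

theorem stmt_11 (n p : ℕ) (ψ : ℝ → ℝ) (hψ : ConvexOn ℝ Set.univ ψ)
    (Ψ : EuclideanSpace ℝ (Fin p) → ℝ) (hΨ : ∀ y, Ψ y = ∑ i, ψ (y i))
    (Ψstar : EuclideanSpace ℝ (Fin p) → EReal)
    (hΨstar : ∀ w, Ψstar w = ⨆ y : EuclideanSpace ℝ (Fin p), ((⟪w, y⟫ - Ψ y : ℝ) : EReal))
    (xstar : EuclideanSpace ℝ (Fin n)) (Y : Matrix (Fin n) (Fin p) ℝ) (β : ℝ) :
    Bornology.IsBounded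
      {u : EuclideanSpace ℝ (Fin p) |
        ∃ x : EuclideanSpace ℝ (Fin n), ‖x‖ = 1 ∧ ‖x - xstar‖ ≤ 1 ∧
          Ψstar (-u) + ((∑ i, u i * |Y.transpose.mulVec x i| : ℝ) : EReal) ≤ (β : EReal)} := by
  set R : Fin p → ℝ := fun i => ∑ j, |Yᵀ i j| + 1
  refine (Metric.isBounded_closedBall (x := 0)
    (r := β + ∑ i, max (ψ (-R i)) (ψ (R i)))).subset fun u ⟨x, hx, _, hu⟩ => ?_
  set w : EuclideanSpace ℝ (Fin p) := WithLp.toLp 2 fun i => |(Yᵀ *ᵥ x) i|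
  have hw : ∀ i, |(w - EuclideanSpace.sign u) i| ≤ R i := fun i => by
    have hYx := Yᵀ.abs_mulVec_apply_le x i
    rw [hx, mul_one] at hYx
    calc |(w - EuclideanSpace.sign u) i| = |w i - SignType.sign (u i)| := rfl
      _ ≤ |w i| + |(SignType.sign (u i) : ℝ)| := abs_sub _ _
      _ ≤ R i := add_le_add (by simpa [w] using hYx) (abs_sign_le_one _)
  rw [hΨstar, ← EuclideanSpace.inner_eq_sum_mul u w] at hu
  have hsum := inner_le_of_conjugate_add_inner_le hu (EuclideanSpace.sign u)
  rw [EuclideanSpace.inner_sign_self, hΨ] at hsum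
  have hΨbound := hψ.sum_comp_le_sum_max hw
  rw [mem_closedBall_zero_iff]
  linarith [u.norm_le_sum_abs]
end
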